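/- Fix natural numbers m ≥ 2 and k ≥ 1 and reals α, β ∈ [0,1]. Let Π be a profile of k ballots over m candidates and let p be a candidate that is eligible in Π, i.e. t(p,Π) ≥ ⌈α·k⌉ and B(p,Π) ≥ β·max_q B(q,Π). Then for any p-raise Π' of Π, p is eligible in Π', i.e. t(p,Π') ≥ ⌈α·k⌉ and B(p,Π') ≥ β·max_q B(q,Π'). (Eligibility preservation step in Case 3 of the monotonicity of CHB.) -/
import Mathlib


open Finset

/-- A ballot over `m` candidates: a bijection assigning to each candidate its rank,
with rank `0` the most preferred. -/
abbrev Ballot (m : ℕ) := Fin m ≃ Fin m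

/-- A profile of `k` ballots over `m` candidates. -/
abbrev Profile (m k : ℕ) := Fin k → Ballot m

/-- The Borda score of candidate `p` in profile `A`: `∑ i, (m - 1 - rank_i(p))`. -/
def borda {m k : ℕ} (A : Profile m k) (p : Fin m) : ℕ :=
  ∑ i, (m - 1 - ((A i) p : ℕ))

/-- The first-place count of candidate `p` in profile `A`. -/
def firstCount {m k : ℕ} (A : Profile m k) (p : Fin m) : ℕ :=
  (Finset.univ.filter (fun i => ((A i) p : ℕ) = 0)).card

/-- `A'` is a `p`-raise of `A`: a single voter `i₀` strictly improves the rank of `p`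
while preserving the relative order of all other candidates. -/
def IsPRaise {m k : ℕ} (p : Fin m) (A A' : Profile m k) : Prop :=
  ∃ i₀ : Fin k,
    (∀ i, i ≠ i₀ → A' i = A i) ∧
    ((A' i₀) p : ℕ) < ((A i₀) p : ℕ) ∧
    ∀ q q' : Fin m, q ≠ p → q' ≠ p →
      (((A' i₀) q : ℕ) < ((A' i₀) q' : ℕ) ↔ ((A i₀) q : ℕ) < ((A i₀) q' : ℕ))

/-- Candidate `p` is eligible in profile `A` (for thresholds `α`, `β`):
its first-place count is at least `⌈α * k⌉` and its Borda score is at least a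
fraction `β` of the maximum Borda score. -/
def Eligible {m k : ℕ} (α β : ℝ) (A : Profile m k) (p : Fin m) : Prop :=
  ⌈α * (k : ℝ)⌉₊ ≤ firstCount A p ∧
  β * ((Finset.univ.sup (borda A) : ℕ) : ℝ) ≤ (borda A p : ℝ)


lemma card_lt_rank {m : ℕ} (e : Fin m ≃ Fin m) (q : Fin m) :
    (univ.filter (fun x => (e x : ℕ) < (e q : ℕ))).card = (e q : ℕ) := by
  have : (univ.filter (fun x => (e x : ℕ) < (e q : ℕ)))
      = (Finset.Iio (e q)).map e.symm.toEmbedding := by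
    ext x
    simp only [mem_filter, mem_univ, true_and, Finset.mem_map, Finset.mem_Iio,
      Equiv.coe_toEmbedding]
    constructor
    · intro h
      exact ⟨e x, h, e.symm_apply_apply x⟩
    · rintro ⟨y, hy, rfl⟩
      rw [e.apply_symm_apply]
      exact hy
  rw [this, card_map, Fin.card_Iio]

lemma rank_split {m : ℕ} (f : Fin m ≃ Fin m) (p q : Fin m) :
    (univ.filter (fun x => x ≠ p ∧ (f x : ℕ) < (f q : ℕ))).card
        + (if (f p : ℕ) < (f q : ℕ) then 1 else 0) = (f q : ℕ) := by
  have h1 : (univ.filter (fun x => (f x : ℕ) < (f q : ℕ))).card = (f q : ℕ) :=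
    card_lt_rank f q
  have h2 := Finset.card_filter_add_card_filter_not
    (s := univ.filter (fun x => (f x : ℕ) < (f q : ℕ))) (p := fun x => x ≠ p)
  have h3 : (univ.filter (fun x => (f x : ℕ) < (f q : ℕ))).filter (fun x => x ≠ p)
      = univ.filter (fun x => x ≠ p ∧ (f x : ℕ) < (f q : ℕ)) := by
    rw [Finset.filter_filter]
    congr 1; ext x; exact and_comm
  have h4 : ((univ.filter (fun x => (f x : ℕ) < (f q : ℕ))).filter
        (fun x => ¬ x ≠ p)).card = (if (f p : ℕ) < (f q : ℕ) then 1 else 0) := by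
    by_cases hpq : (f p : ℕ) < (f q : ℕ)
    · rw [if_pos hpq, Finset.card_eq_one]
      refine ⟨p, ?_⟩
      ext x
      simp only [mem_filter, mem_univ, true_and, not_not, Finset.mem_singleton]
      constructor
      · rintro ⟨_, h⟩; exact h
      · rintro rfl; exact ⟨hpq, rfl⟩
    · rw [if_neg hpq, Finset.card_eq_zero]
      ext x
      simp only [mem_filter, mem_univ, true_and, not_not, Finset.notMem_empty, iff_false]
      rintro ⟨h, rfl⟩
      exact hpq h
  rw [h3, h4] at h2
  omega

lemma pRaise_rank_le {m : ℕ} (e e' : Fin m ≃ Fin m) (p : Fin m)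
    (hp : ((e' p : ℕ)) < (e p : ℕ))
    (hpres : ∀ q q' : Fin m, q ≠ p → q' ≠ p →
      (((e' q : ℕ)) < ((e' q' : ℕ)) ↔ ((e q : ℕ)) < ((e q' : ℕ))))
    (q : Fin m) (hq : q ≠ p) : (e q : ℕ) ≤ (e' q : ℕ) := by
  have hc : (univ.filter (fun x => x ≠ p ∧ (e' x : ℕ) < (e' q : ℕ))).card
      = (univ.filter (fun x => x ≠ p ∧ (e x : ℕ) < (e q : ℕ))).card := by
    congr 1
    ext x
    simp only [mem_filter, mem_univ, true_and, and_congr_right_iff]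
    intro hx
    exact hpres x q hx hq
  have h1 := rank_split e p q
  have h2 := rank_split e' p q
  rw [hc] at h2
  by_cases hpq : (e p : ℕ) < (e q : ℕ)
  · by_cases hpq' : (e' p : ℕ) < (e' q : ℕ)
    · rw [if_pos hpq] at h1; rw [if_pos hpq'] at h2; omega
    · -- contradiction: e' q ≤ e' p < e p < e q, and counts
      rw [if_pos hpq] at h1; rw [if_neg hpq'] at h2
      omega
  · rw [if_neg hpq] at h1
    by_cases hpq' : (e' p : ℕ) < (e' q : ℕ)
    · rw [if_pos hpq'] at h2; omega
    · rw [if_neg hpq'] at h2; omega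

/-- **Eligibility preservation step in Case 3 of the monotonicity of CHB.** If `p` is
eligible in `A`, then `p` is eligible in any `p`-raise `A'` of `A`. -/
theorem eligible_of_pRaise {m k : ℕ} (hm : 2 ≤ m) (hk : 1 ≤ k)
    (α β : ℝ) (hα0 : 0 ≤ α) (hα1 : α ≤ 1) (hβ0 : 0 ≤ β) (hβ1 : β ≤ 1)
    (A A' : Profile m k) (p : Fin m)
    (helig : Eligible α β A p) (hraise : IsPRaise p A A') :
    Eligible α β A' p := by
  obtain ⟨i₀, hother, hlt, hpres⟩ := hraise
  obtain ⟨ht, hb⟩ := helig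
  -- first-place count
  have hfc : firstCount A p ≤ firstCount A' p := by
    apply Finset.card_le_card
    intro i hi
    simp only [mem_filter, mem_univ, true_and] at hi ⊢
    by_cases h : i = i₀
    · subst h; omega
    · rw [hother i h]; exact hi
  -- borda of p increases
  have hbp : borda A p ≤ borda A' p := by
    apply Finset.sum_le_sum
    intro i _
    by_cases h : i = i₀
    · subst h; omega
    · rw [hother i h]
  -- borda of others decreases
  have hbq : ∀ q : Fin m, q ≠ p → borda A' q ≤ borda A q := by
    intro q hq
    apply Finset.sum_le_sum
    intro i _
    by_cases h : i = i₀
    · subst h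
      have := pRaise_rank_le (A i) (A' i) p hlt hpres q hq
      omega
    · rw [hother i h]
  have hsup : univ.sup (borda A') ≤ max (borda A' p) (univ.sup (borda A)) := by
    apply Finset.sup_le
    intro q _
    by_cases hq : q = p
    · subst hq; exact le_max_left _ _
    · exact le_trans (hbq q hq) (le_trans (Finset.le_sup (mem_univ q)) (le_max_right _ _))
  refine ⟨le_trans ht hfc, ?_⟩
  have hbp' : (borda A p : ℝ) ≤ (borda A' p : ℝ) := Nat.cast_le.mpr hbp
  rcases le_total (borda A' p) (univ.sup (borda A)) with hc | hc
  · have h1 : ((univ.sup (borda A') : ℕ) : ℝ) ≤ ((univ.sup (borda A) : ℕ) : ℝ) := by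
      exact_mod_cast le_trans hsup (max_le hc le_rfl)
    calc β * ((univ.sup (borda A') : ℕ) : ℝ) ≤ β * ((univ.sup (borda A) : ℕ) : ℝ) :=
          mul_le_mul_of_nonneg_left h1 hβ0
      _ ≤ (borda A p : ℝ) := hb
      _ ≤ _ := hbp'
  · have h1 : ((univ.sup (borda A') : ℕ) : ℝ) ≤ (borda A' p : ℝ) := by
      exact_mod_cast le_trans hsup (max_le le_rfl hc)
    calc β * ((univ.sup (borda A') : ℕ) : ℝ) ≤ 1 * (borda A' p : ℝ) := by
          apply mul_le_mul hβ1 h1 (by positivity) zero_le_one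
      _ = _ := one_mul _
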